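/- Let A, B ∈ {0,1,2}^n with ∑a_i + ∑b_i ≡ 1 (mod 3) and suppose that a_i + b_i ≢ 0 (mod 3) for at least two indices i. Then the set C_{2,n} ∩ {S_{A,1} ≤ 2−∑a_i} ∩ {S_{B,2} ≤ 2−∑b_i} has Lebesgue measure zero in ℝ^{2n}. -/

import Mathlib

open MeasureTheory Finset

/-- `u_0=(1,2), u_1=(1,−1), u_2=(−2,−1)`. -/
noncomputable def uVec : Fin 3 → Fin 2 → ℝ := ![![1, 2], ![1, -1], ![-2, -1]]

/-- `w_0=(2,1), w_1=(−1,1), w_2=(−1,−2)`. -/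
noncomputable def wVec : Fin 3 → Fin 2 → ℝ := ![![2, 1], ![-1, 1], ![-1, -2]]

/-! On the simplex `Δ₂` each block satisfies
`(aᵢ + bᵢ) mod 3 ≤ aᵢ + bᵢ + ⟨u_{aᵢ}, xⁱ⟩ + ⟨w_{bᵢ}, xⁱ⟩` (nine linear inequalities).
Summing over the blocks, the two half-space constraints give `∑ (aᵢ + bᵢ) mod 3 ≤ 4`. The
hypotheses make this sum `≡ 1 (mod 3)` and at least `2`, hence at least `4`, so both constraints
are tight: the set lies in the hyperplane `S_{A,1} = 2 − ∑ aᵢ`, which is null because `S_{A,1}`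
is a nonzero linear functional. -/

theorem MeasureTheory.Measure.addHaar_setOf_linearMap_eq {E : Type*} [NormedAddCommGroup E]
    [NormedSpace ℝ E] [MeasurableSpace E] [BorelSpace E] [FiniteDimensional ℝ E] (μ : Measure E)
    [μ.IsAddHaarMeasure] {L : E →ₗ[ℝ] ℝ} (hL : L ≠ 0) (c : ℝ) : μ {x | L x = c} = 0 := by
  have hlevel : {x | L x = c} = ((affineSpan ℝ {c}).comap L.toAffineMap : Set E) := by
    ext x; simp
  rw [hlevel]
  refine Measure.addHaar_affineSubspace μ _ fun htop => hL ?_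
  have hconst : ∀ x, L x = c := fun x => by
    simpa using (htop ▸ AffineSubspace.mem_top ℝ E x :
      x ∈ (affineSpan ℝ {c}).comap L.toAffineMap)
  ext x
  simp [hconst x, ← hconst 0]

theorem volume_setOf_dotProduct_eq {ι : Type*} [Fintype ι] {w : ι → ℝ}
    (hw : w ≠ 0) (c : ℝ) : volume {x : ι → ℝ | w ⬝ᵥ x = c} = 0 := by
  classical
  exact Measure.addHaar_setOf_linearMap_eq volume
    ((LinearEquiv.map_ne_zero_iff (dotProductEquiv ℝ ι)).mpr hw) c

theorem four_le_sum_mod_three {ι : Type*} [Fintype ι] (f : ι → ℕ) (hsum : (∑ i, f i) % 3 = 1)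
    (hcard : 2 ≤ #{i | f i % 3 ≠ 0}) : 4 ≤ ∑ i, f i % 3 := by
  have hmod : (∑ i, f i % 3) % 3 = 1 := by rw [← sum_nat_mod, hsum]
  have hle : #{i | f i % 3 ≠ 0} ≤ ∑ i, f i % 3 := by
    rw [card_filter]
    exact sum_le_sum fun i _ => by split_ifs <;> omega
  omega

theorem sum_fin_two_mul_eq_dotProduct {n : ℕ} (v : Fin n → Fin 2 → ℝ) (x : Fin n × Fin 2 → ℝ) :
    ∑ j, (v j 0 * x (j, 0) + v j 1 * x (j, 1)) = (fun p => v p.1 p.2) ⬝ᵥ x := by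
  simp [dotProduct, Fintype.sum_prod_type]

theorem mod_three_le_add_uVec_add_wVec (a b : Fin 3) {x₀ x₁ : ℝ} (h₀ : 0 ≤ x₀) (h₁ : 0 ≤ x₁)
    (hx : x₀ + x₁ ≤ 1) :
    ((((a : ℕ) + b) % 3 : ℕ) : ℝ) ≤
      (a : ℕ) + (b : ℕ) + (uVec a 0 * x₀ + uVec a 1 * x₁) + (wVec b 0 * x₀ + wVec b 1 * x₁) := by
  fin_cases a <;> fin_cases b <;> norm_num [uVec, wVec] <;> linarith

theorem uVec_apply_zero_ne_zero (a : Fin 3) : uVec a 0 ≠ 0 := by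
  fin_cases a <;> norm_num [uVec]

theorem sum_uVec_eq_of_four_le {n : ℕ} (A B : Fin n → Fin 3)
    (hm : 4 ≤ ∑ j, ((A j : ℕ) + B j) % 3) {x : Fin n × Fin 2 → ℝ}
    (hx₀ : ∀ p, 0 ≤ x p) (hx : ∀ j, x (j, 0) + x (j, 1) ≤ 1)
    (hA : ∑ j, (uVec (A j) 0 * x (j, 0) + uVec (A j) 1 * x (j, 1)) ≤ 2 - ∑ j, ((A j : ℕ) : ℝ))
    (hB : ∑ j, (wVec (B j) 0 * x (j, 0) + wVec (B j) 1 * x (j, 1)) ≤ 2 - ∑ j, ((B j : ℕ) : ℝ)) :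
    ∑ j, (uVec (A j) 0 * x (j, 0) + uVec (A j) 1 * x (j, 1)) = 2 - ∑ j, ((A j : ℕ) : ℝ) := by
  have hsum := sum_le_sum fun j (_ : j ∈ univ) =>
    mod_three_le_add_uVec_add_wVec (A j) (B j) (hx₀ (j, 0)) (hx₀ (j, 1)) (hx j)
  have h4 : (4 : ℝ) ≤ ∑ j, ((((A j : ℕ) + B j) % 3 : ℕ) : ℝ) := by exact_mod_cast hm
  simp only [sum_add_distrib] at hsum hA hB ⊢
  linarith

/-- If `∑ a_i + ∑ b_i ≡ 1 (mod 3)` and `a_i + b_i ≢ 0 (mod 3)` for at least two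
indices, then `C_{2,n} ∩ {S_{A,1} ≤ 2−∑a_i} ∩ {S_{B,2} ≤ 2−∑b_i}` has Lebesgue
measure zero. -/
theorem stmt18 (n : ℕ) (A B : Fin n → Fin 3)
    (h1 : ((∑ i, ((A i : ℕ))) + ∑ i, ((B i : ℕ))) % 3 = 1)
    (h2 : 2 ≤ (Finset.univ.filter fun i : Fin n =>
      ((A i : ℕ) + (B i : ℕ)) % 3 ≠ 0).card) :
    volume {x : Fin n × Fin 2 → ℝ |
        (∀ p, 0 ≤ x p) ∧ (∀ j, x (j, 0) + x (j, 1) ≤ 1) ∧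
        (∑ j, (uVec (A j) 0 * x (j, 0) + uVec (A j) 1 * x (j, 1))
            ≤ 2 - ∑ j, ((A j : ℕ) : ℝ)) ∧
        (∑ j, (wVec (B j) 0 * x (j, 0) + wVec (B j) 1 * x (j, 1))
            ≤ 2 - ∑ j, ((B j : ℕ) : ℝ))} = 0 := by
  have hm : 4 ≤ ∑ j, ((A j : ℕ) + B j) % 3 :=
    four_le_sum_mod_three (fun j => (A j : ℕ) + B j) (by rwa [sum_add_distrib]) h2
  obtain ⟨j, -⟩ : (univ.filter fun i : Fin n => ((A i : ℕ) + (B i : ℕ)) % 3 ≠ 0).Nonempty :=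
    card_pos.mp (by omega)
  refine measure_mono_null (fun x ⟨hx₀, hx, hA, hB⟩ => ?_)
    (volume_setOf_dotProduct_eq (w := fun p => uVec (A p.1) p.2) (fun hw => ?_)
      (2 - ∑ j, ((A j : ℕ) : ℝ)))
  · rw [Set.mem_ofPred_eq, ← sum_fin_two_mul_eq_dotProduct (fun j => uVec (A j))]
    exact sum_uVec_eq_of_four_le A B hm hx₀ hx hA hB
  · exact uVec_apply_zero_ne_zero (A j) (congrFun hw (j, 0))
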